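/- The vector potential A¹ = u₁u₂, A² = ½u₂² - (i√3/96)u₁³ on ℂ² with unit e = ∂/∂u₂ satisfies the oriented associativity equations: ∂_j∂_l A^i ∂_k∂_m A^l = ∂_k∂_l A^i ∂_j∂_m A^l for all indices, and ∂₂∂_i A^j = δ_i^j. Moreover, lowering the index of the potential with the constant metric η = [[0,1/12],[1/12,0]] yields an exact 1-form, i.e. the structure constants cⁱ_{jk} = ∂_j∂_k A^i satisfy η_{il}cˡ_{jk} = η_{jl}cˡ_{ik}, so this flat F-manifold structure comes from a Frobenius potential. -/

import Mathlib

open scoped BigOperators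

/-- Partial derivative in the `i`-th coordinate direction on `ℂⁿ`. -/
noncomputable def pd {n : ℕ} (i : Fin n) (f : (Fin n → ℂ) → ℂ) (p : Fin n → ℂ) : ℂ :=
  fderiv ℂ f p (Pi.single i 1)

/-- Second partial derivative `∂_i ∂_j f`. -/
noncomputable def sd {n : ℕ} (i j : Fin n) (f : (Fin n → ℂ) → ℂ) (p : Fin n → ℂ) : ℂ :=
  pd i (pd j f) p

/-- The vector potential of the bi-flat F-structure on the orbit space of `G₄`:
`A¹ = u₁u₂`, `A² = ½u₂² - (i√3/96)u₁³`. -/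
noncomputable def AG4 : Fin 2 → (Fin 2 → ℂ) → ℂ :=
  ![fun p => p 0 * p 1,
    fun p => (1/2) * (p 1)^2 - (Complex.I * (Real.sqrt 3 : ℂ) / 96) * (p 0)^3]

/-- Structure constants `cⁱ_{jk} = ∂_j∂_k A^i` of the `G₄` potential. -/
noncomputable def cG4 (i j k : Fin 2) (p : Fin 2 → ℂ) : ℂ := sd j k (AG4 i) p

/-- The invariant metric `η = [[0,1/12],[1/12,0]]`. -/
noncomputable def ηG4 : Fin 2 → Fin 2 → ℂ := ![![0, 1/12], ![1/12, 0]]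

/-! Every second derivative `∂_j∂_k A¹` is constant, and so is every `∂₂∂_i A²`; together they
say that `e₂` is a left unit of the product. In dimension two a left unit already gives the
oriented associativity equations, since for `j ≠ k` one of `e_j`, `e_k` is the unit, and
invariance of `η` reduces to `c²_{2k} = c¹_{1k} = δ_{k2}`. The cubic term of `A²` enters
neither computation. -/

section PartialDerivative

variable {n : ℕ} {f g : (Fin n → ℂ) → ℂ} {p : Fin n → ℂ} (i : Fin n)

theorem pd_coord (j : Fin n) : pd i (fun q => q j) p = if j = i then 1 else 0 := by
  rw [pd, fderiv_apply differentiableAt_id j]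
  simp [Pi.single_apply]

theorem pd_const_mul (c : ℂ) (hf : DifferentiableAt ℂ f p) :
    pd i (fun q => c * f q) p = c * pd i f p := by
  simp [pd, fderiv_const_mul hf]

theorem pd_sub (hf : DifferentiableAt ℂ f p) (hg : DifferentiableAt ℂ g p) :
    pd i (fun q => f q - g q) p = pd i f p - pd i g p := by
  simp [pd, fderiv_fun_sub hf hg]

theorem pd_mul (hf : DifferentiableAt ℂ f p) (hg : DifferentiableAt ℂ g p) :
    pd i (fun q => f q * g q) p = pd i f p * g p + f p * pd i g p := by
  simp only [pd, fderiv_fun_mul hf hg, add_apply, smul_apply, smul_eq_mul]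
  ring

theorem pd_pow (m : ℕ) (hf : DifferentiableAt ℂ f p) :
    pd i (fun q => f q ^ m) p = m * f p ^ (m - 1) * pd i f p := by
  simp [pd, (hf.hasFDerivAt.pow m).fderiv]

end PartialDerivative

theorem pd_AG4_zero (j : Fin 2) : pd j (AG4 0) = fun q => if j = 0 then q 1 else q 0 := by
  fin_cases j <;> funext q <;> simp (disch := fun_prop) [AG4, pd_mul, pd_coord]

theorem pd_zero_AG4_one :
    pd 0 (AG4 1) = fun q => -(3 * (Complex.I * Real.sqrt 3 / 96)) * q 0 ^ 2 := by
  funext q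
  simp (disch := fun_prop) [AG4, pd_sub, pd_const_mul, pd_pow, pd_coord, mul_assoc, mul_left_comm]

theorem pd_one_AG4_one : pd 1 (AG4 1) = fun q => q 1 := by
  funext q
  simp (disch := fun_prop) [AG4, pd_sub, pd_const_mul, pd_pow, pd_coord,
    inv_mul_cancel_left₀ (two_ne_zero : (2 : ℂ) ≠ 0)]

theorem cG4_zero (j k : Fin 2) (p : Fin 2 → ℂ) : cG4 0 j k p = if j = k then 0 else 1 := by
  fin_cases j <;> fin_cases k <;> simp [cG4, sd, pd_AG4_zero, pd_coord]

theorem pd_one_pd_zero_AG4_one (p : Fin 2 → ℂ) : pd 1 (pd 0 (AG4 1)) p = 0 := by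
  rw [pd_zero_AG4_one, pd_const_mul _ _ (by fun_prop)]
  simp (disch := fun_prop) [pd_pow, pd_coord]

theorem cG4_unit (p : Fin 2 → ℂ) (i j : Fin 2) : cG4 j 1 i p = if i = j then 1 else 0 := by
  fin_cases j <;> fin_cases i <;>
    simp [cG4, sd, pd_AG4_zero, pd_one_pd_zero_AG4_one, pd_one_AG4_one, pd_coord]

theorem sum_mul_left_comm_of_unit {R : Type*} [CommSemiring R] (c : Fin 2 → Fin 2 → Fin 2 → R)
    (hunit : ∀ i j, c j 1 i = if i = j then 1 else 0) (i j k m : Fin 2) :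
    ∑ l, c i j l * c l k m = ∑ l, c i k l * c l j m := by
  fin_cases j <;> fin_cases k <;> simp [Fin.sum_univ_two, hunit]

theorem sum_ηG4_mul_cG4_comm (p : Fin 2 → ℂ) (i j k : Fin 2) :
    ∑ l, ηG4 i l * cG4 l j k p = ∑ l, ηG4 j l * cG4 l i k p := by
  fin_cases i <;> fin_cases j <;> fin_cases k <;> simp [Fin.sum_univ_two, ηG4, cG4_zero, cG4_unit]

/-- The vector potential `A¹ = u₁u₂`, `A² = ½u₂² - (i√3/96)u₁³` on `ℂ²`, with unit
`e = ∂/∂u₂`, satisfies the oriented associativity equations, and lowering an index with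
the constant metric `η = [[0,1/12],[1/12,0]]` gives totally symmetric quantities
(`η_{il}cˡ_{jk} = η_{jl}cˡ_{ik}`), so this flat F-manifold structure comes from a
Frobenius potential. -/
theorem G4_potential_oriented_associativity_and_metric :
    -- oriented associativity: ∂_j∂_l A^i ∂_k∂_m A^l = ∂_k∂_l A^i ∂_j∂_m A^l
    (∀ (p : Fin 2 → ℂ) (i j k m : Fin 2),
      (∑ l, cG4 i j l p * cG4 l k m p) = ∑ l, cG4 i k l p * cG4 l j m p) ∧
    -- e = ∂/∂u₂ is the unit: ∂₂∂_i A^j = δ^j_i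
    (∀ (p : Fin 2 → ℂ) (i j : Fin 2),
      cG4 j 1 i p = if i = j then (1 : ℂ) else 0) ∧
    -- invariance of the metric: η_{il}cˡ_{jk} = η_{jl}cˡ_{ik}
    (∀ (p : Fin 2 → ℂ) (i j k : Fin 2),
      (∑ l, ηG4 i l * cG4 l j k p) = ∑ l, ηG4 j l * cG4 l i k p) :=
  ⟨fun p => sum_mul_left_comm_of_unit (fun i j k => cG4 i j k p) (cG4_unit p), cG4_unit,
    sum_ηG4_mul_cG4_comm⟩
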